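/- arXiv:1009.1858 — 5 statements merged into one kernel-verified Lean document; each statement's English description precedes it below -/
import Mathlib

section
/- Let A be densely defined and closed with A*A ≥ εI and R ∈ B(H). If λ₀ ≠ 0 is an eigenvalue of iG_{A,R} with eigenvector (u, v) ∈ dom(A*A) ⊕ dom(A), then (v, -iAu) ∈ dom(A) ⊕ dom(A*) is an eigenvector of the perturbed Dirac-type operator Q + S = ((-iR, A*), (A, 0)) with the same eigenvalue λ₀. -/
/-!
The first eigen-equation `i v = λ₀ u` gives `v = λ₀ (-i u)`, and applying `A` yields the second
row of `Q + S`; the first row is the second eigen-equation multiplied by `-i`. The new vector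
is nonzero because `A u = 0` would force `u = 0` by coercivity of `A`.
-/

open Complex

lemma eq_zero_of_mul_sq_norm_le {E F : Type*} [NormedAddCommGroup E] [SeminormedAddCommGroup F]
    {ε : ℝ} (hε : 0 < ε) {x : E} {y : F} (h : ε * ‖x‖ ^ 2 ≤ ‖y‖ ^ 2) (hy : y = 0) : x = 0 := by
  rw [hy, norm_zero, zero_pow two_ne_zero] at h
  have hx : ‖x‖ ^ 2 ≤ 0 := (mul_nonpos_iff_pos_imp_nonpos.1 h).1 hε
  simpa using hx

lemma eq_smul_neg_I_smul_of_I_smul_eq {M : Type*} [AddCommGroup M] [Module ℂ M]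
    {u v : M} {c : ℂ} (h : I • v = c • u) : v = c • ((-I) • u) := by
  rw [smul_comm, ← h, smul_smul, neg_mul, I_mul_I, neg_neg, one_smul]

theorem stmt_2_general {H : Type*} [NormedAddCommGroup H] [InnerProductSpace ℂ H]
    (domA domAs : Submodule ℂ H) (A As : H →ₗ[ℂ] H) (R : H →L[ℂ] H)
    (ε : ℝ) (hε : 0 < ε)
    (hcoer : ∀ u ∈ domA, ε * ‖u‖ ^ 2 ≤ ‖A u‖ ^ 2)
    (lam0 : ℂ)
    (u v : H) (hu : u ∈ domA) (huA : A u ∈ domAs) (hv : v ∈ domA)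
    (hne : ¬(u = 0 ∧ v = 0))
    (heig1 : Complex.I • v = lam0 • u)
    (heig2 : Complex.I • (-(As (A u)) - R v) = lam0 • v) :
    -- (v, -iAu) belongs to dom(A) ⊕ dom(A*) and is an eigenvector of Q + S for λ₀ :
    v ∈ domA ∧ (-Complex.I) • A u ∈ domAs ∧ ¬(v = 0 ∧ (-Complex.I) • A u = 0) ∧
      (-Complex.I) • R v + As ((-Complex.I) • A u) = lam0 • v ∧
      A v = lam0 • ((-Complex.I) • A u) := by
  refine ⟨hv, domAs.smul_mem _ huA, ?_, ?_, ?_⟩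
  · rintro ⟨hv0, hAu0⟩
    have hAu : A u = 0 := (smul_eq_zero.1 hAu0).resolve_left (neg_ne_zero.2 I_ne_zero)
    exact hne ⟨eq_zero_of_mul_sq_norm_le hε (hcoer u hu) hAu, hv0⟩
  · rw [map_smul, ← heig2]
    module
  · rw [eq_smul_neg_I_smul_of_I_smul_eq heig1, map_smul, map_smul]

/-- Let `A` be densely defined and closed with `A*A ≥ εI` and
`R ∈ B(H)`.  If `λ₀ ≠ 0` is an eigenvalue of `iG_{A,R} = i((0, I), (-A*A, -R))` with
eigenvector `(u, v) ∈ dom(A*A) ⊕ dom(A)`, then `(v, -iAu) ∈ dom(A) ⊕ dom(A*)` is an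
eigenvector of the perturbed Dirac-type operator `Q + S = ((-iR, A*), (A, 0))` with
the same eigenvalue `λ₀`. -/
theorem stmt_2 {H : Type*} [NormedAddCommGroup H] [InnerProductSpace ℂ H] [CompleteSpace H]
    (domA domAs : Submodule ℂ H) (A As : H →ₗ[ℂ] H) (R : H →L[ℂ] H)
    (hdense : Dense (domA : Set H))
    (hclosed : IsClosed {p : H × H | p.1 ∈ domA ∧ p.2 = A p.1})
    (hadj : ∀ u ∈ domA, ∀ v ∈ domAs, (inner ℂ (As v) u : ℂ) = inner ℂ v (A u))
    (ε : ℝ) (hε : 0 < ε)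
    (hcoer : ∀ u ∈ domA, ε * ‖u‖ ^ 2 ≤ ‖A u‖ ^ 2)
    (lam0 : ℂ) (hlam0 : lam0 ≠ 0)
    (u v : H) (hu : u ∈ domA) (huA : A u ∈ domAs) (hv : v ∈ domA)
    (hne : ¬(u = 0 ∧ v = 0))
    (heig1 : Complex.I • v = lam0 • u)
    (heig2 : Complex.I • (-(As (A u)) - R v) = lam0 • v) :
    -- (v, -iAu) belongs to dom(A) ⊕ dom(A*) and is an eigenvector of Q + S for λ₀ :
    v ∈ domA ∧ (-Complex.I) • A u ∈ domAs ∧ ¬(v = 0 ∧ (-Complex.I) • A u = 0) ∧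
      (-Complex.I) • R v + As ((-Complex.I) • A u) = lam0 • v ∧
      A v = lam0 • ((-Complex.I) • A u) :=
  stmt_2_general domA domAs A As R ε hε hcoer lam0 u v hu huA hv hne heig1 heig2
end

section
/- Let A be densely defined and closed with A*A ≥ εI for some ε > 0 and R ∈ B(H). If λ₁ ≠ 0 is an eigenvalue of Q + S = ((-iR, A*),(A, 0)) with eigenvector (ψ₁, ψ₂), then ψ₂ ∈ ran(A), and writing u = i A⁻¹|_{ran(A)} ψ₂, the vector (u, ψ₁) lies in dom(A*A) ⊕ dom(A) and is an eigenvector of iG_{A,R} with eigenvalue λ₁. -/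
/-! The second row `A ψ₁ = λ₁ ψ₂` of the eigenvalue equation, with `λ₁ ≠ 0`, exhibits
`ψ₂ = A (λ₁⁻¹ ψ₁)` as an element of `ran(A)`, so `u = i λ₁⁻¹ ψ₁` and `A u = i ψ₂ ∈ dom(A*)`.
Multiplying the first row `-i R ψ₁ + A* ψ₂ = λ₁ ψ₁` through by `i² = -1` turns it into the
second row of `iG_{A,R} (u, ψ₁) = λ₁ (u, ψ₁)`. -/

theorem stmt_3_general {H : Type*} [NormedAddCommGroup H] [InnerProductSpace ℂ H]
    (domA domAs : Submodule ℂ H) (A As : H →ₗ[ℂ] H) (R : H →L[ℂ] H)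
    (lam1 : ℂ) (hlam1 : lam1 ≠ 0)
    (ψ₁ ψ₂ : H) (hψ₁ : ψ₁ ∈ domA) (hψ₂ : ψ₂ ∈ domAs)
    (hne : ¬(ψ₁ = 0 ∧ ψ₂ = 0))
    (heig1 : (-Complex.I) • R ψ₁ + As ψ₂ = lam1 • ψ₁)
    (heig2 : A ψ₁ = lam1 • ψ₂) :
    ∃ w : H, w ∈ domA ∧ A w = ψ₂ ∧
      -- u = i•w ∈ dom(A*A) :
      Complex.I • w ∈ domA ∧ A (Complex.I • w) ∈ domAs ∧
      ¬(Complex.I • w = 0 ∧ ψ₁ = 0) ∧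
      -- iG_{A,R} (u, ψ₁) = λ₁ (u, ψ₁) :
      Complex.I • ψ₁ = lam1 • (Complex.I • w) ∧
      Complex.I • (-(As (A (Complex.I • w))) - R ψ₁) = lam1 • ψ₁ := by
  have hw : A (lam1⁻¹ • ψ₁) = ψ₂ := by rw [map_smul, heig2, inv_smul_smul₀ hlam1]
  have hAu : A (Complex.I • lam1⁻¹ • ψ₁) = Complex.I • ψ₂ := by rw [map_smul, hw]
  have hψ₁_ne : ψ₁ ≠ 0 := by
    rintro rfl
    rw [map_zero, eq_comm, smul_eq_zero] at heig2
    exact hne ⟨rfl, heig2.resolve_left hlam1⟩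
  refine ⟨lam1⁻¹ • ψ₁, domA.smul_mem _ hψ₁, hw, domA.smul_mem _ (domA.smul_mem _ hψ₁),
    hAu ▸ domAs.smul_mem _ hψ₂, fun h => hψ₁_ne h.2, ?_, ?_⟩
  · rw [smul_comm lam1, smul_inv_smul₀ hlam1]
  · rw [hAu, map_smul, ← heig1, smul_sub, smul_neg, smul_smul, Complex.I_mul_I, neg_one_smul, neg_neg,
      neg_smul, sub_eq_neg_add]

/-- Let `A` be densely defined and closed with `A*A ≥ εI` for some
`ε > 0` (so that `ker(A) = {0}` and `A : dom(A) → ran(A)` is a bijection) and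
`R ∈ B(H)`.  If `λ₁ ≠ 0` is an eigenvalue of `Q + S = ((-iR, A*), (A, 0))` with
eigenvector `(ψ₁, ψ₂)`, then `ψ₂ ∈ ran(A)`, i.e. `ψ₂ = A w` for a (unique) `w ∈ dom(A)`,
and the vector `(u, ψ₁)` with `u = i A⁻¹|_{ran(A)} ψ₂ = i • w` lies in
`dom(A*A) ⊕ dom(A)` and is an eigenvector of `iG_{A,R}` with eigenvalue `λ₁`. -/
theorem stmt_3 {H : Type*} [NormedAddCommGroup H] [InnerProductSpace ℂ H] [CompleteSpace H]
    (domA domAs : Submodule ℂ H) (A As : H →ₗ[ℂ] H) (R : H →L[ℂ] H)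
    (hdense : Dense (domA : Set H))
    (hclosed : IsClosed {p : H × H | p.1 ∈ domA ∧ p.2 = A p.1})
    (hadj : ∀ u ∈ domA, ∀ v ∈ domAs, (inner ℂ (As v) u : ℂ) = inner ℂ v (A u))
    (ε : ℝ) (hε : 0 < ε)
    (hcoer : ∀ u ∈ domA, ε * ‖u‖ ^ 2 ≤ ‖A u‖ ^ 2)
    (lam1 : ℂ) (hlam1 : lam1 ≠ 0)
    (ψ₁ ψ₂ : H) (hψ₁ : ψ₁ ∈ domA) (hψ₂ : ψ₂ ∈ domAs)
    (hne : ¬(ψ₁ = 0 ∧ ψ₂ = 0))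
    (heig1 : (-Complex.I) • R ψ₁ + As ψ₂ = lam1 • ψ₁)
    (heig2 : A ψ₁ = lam1 • ψ₂) :
    ∃ w : H, w ∈ domA ∧ A w = ψ₂ ∧
      -- u = i•w ∈ dom(A*A) :
      Complex.I • w ∈ domA ∧ A (Complex.I • w) ∈ domAs ∧
      ¬(Complex.I • w = 0 ∧ ψ₁ = 0) ∧
      -- iG_{A,R} (u, ψ₁) = λ₁ (u, ψ₁) :
      Complex.I • ψ₁ = lam1 • (Complex.I • w) ∧
      Complex.I • (-(As (A (Complex.I • w))) - R ψ₁) = lam1 • ψ₁ :=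
  stmt_3_general domA domAs A As R lam1 hlam1 ψ₁ ψ₂ hψ₁ hψ₂ hne heig1 heig2
end

section
/- Let A be densely defined and closed with A*A ≥ εI > 0 and R ∈ B(H), and let 𝔠 be a conjugation (antilinear involution with (𝔠u, v) = (𝔠v, u)) on H such that 𝔠 A*A 𝔠 = A*A and 𝔠 R 𝔠 = R. Then λ₀ is an eigenvalue of iG_{A,R} if and only if -conj(λ₀) is an eigenvalue of iG_{A,R}. -/
/-- `lam` is an eigenvalue of `iG_{A,R} = i((0,I),(-A*A,-R))` (with domain
`dom(A*A) ⊕ dom(A)`), where the unbounded operator `A` (resp. its adjoint `A*`) is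
encoded by a total linear map `A` (resp. `As`) together with its domain `domA`
(resp. `domAs`). -/
def IsEigenvalueIG {H : Type*} [NormedAddCommGroup H] [InnerProductSpace ℂ H]
    (domA domAs : Submodule ℂ H) (A As : H →ₗ[ℂ] H) (R : H →L[ℂ] H) (lam : ℂ) : Prop :=
  ∃ u v : H, u ∈ domA ∧ A u ∈ domAs ∧ v ∈ domA ∧ ¬(u = 0 ∧ v = 0) ∧
    Complex.I • v = lam • u ∧ Complex.I • (-(As (A u)) - R v) = lam • v

/-!
Conjugating an eigenvector `(u, v)` of `iG_{A,R}` componentwise by `𝔠` gives an eigenvector: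
`𝔠` commutes with `G_{A,R}` and is antilinear, so it turns `i` into `-i` and `λ` into
`conj λ`, i.e. `𝔠 (iG) 𝔠 = -iG`.  Hence eigenvalues come in pairs `λ, -conj λ`.
-/

open ComplexConjugate

theorem I_smul_map_eq_of_I_smul_eq {M : Type*} [AddCommGroup M] [Module ℂ M]
    (C : M →ₗ⋆[ℂ] M) {w z : M} {lam : ℂ}
    (h : Complex.I • w = lam • z) : Complex.I • C w = (-conj lam) • C z := by
  have hC := congrArg C h
  rw [map_smulₛₗ, map_smulₛₗ, Complex.conj_I, neg_smul] at hC
  rw [neg_smul, ← hC, neg_neg]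

section Conjugation

variable {H : Type*} [NormedAddCommGroup H] [InnerProductSpace ℂ H]
  {domA domAs : Submodule ℂ H} {A As : H →ₗ[ℂ] H} {R : H →L[ℂ] H}

theorem IsEigenvalueIG.neg_conj (C : H →ₗ⋆[ℂ] H) (hCinv : Function.Involutive C)
    (hCdom : ∀ x ∈ domA, C x ∈ domA)
    (hCAA : ∀ x, x ∈ domA → A x ∈ domAs → A (C x) ∈ domAs ∧ As (A (C x)) = C (As (A x)))
    (hCR : ∀ x, C (R (C x)) = R x) {lam : ℂ} (h : IsEigenvalueIG domA domAs A As R lam) :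
    IsEigenvalueIG domA domAs A As R (-conj lam) := by
  obtain ⟨u, v, hu, hAu, hv, hnz, hfirst, hsecond⟩ := h
  obtain ⟨hACu, hAAC⟩ := hCAA u hu hAu
  have hRC : R (C v) = C (R v) := by rw [← hCR (C v), hCinv]
  refine ⟨C u, C v, hCdom u hu, hACu, hCdom v hv, ?_,
    I_smul_map_eq_of_I_smul_eq C hfirst, ?_⟩
  · rintro ⟨hu0, hv0⟩
    exact hnz ⟨hCinv.injective (by rw [hu0, map_zero]), hCinv.injective (by rw [hv0, map_zero])⟩
  · rw [hAAC, hRC, ← map_neg, ← map_sub]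
    exact I_smul_map_eq_of_I_smul_eq C hsecond

end Conjugation

theorem stmt_4_general {H : Type*} [NormedAddCommGroup H] [InnerProductSpace ℂ H]
    (domA domAs : Submodule ℂ H) (A As : H →ₗ[ℂ] H) (R : H →L[ℂ] H)
    (C : H → H)
    (hCadd : ∀ x y, C (x + y) = C x + C y)
    (hCsmul : ∀ (a : ℂ) (x : H), C (a • x) = (starRingEnd ℂ) a • C x)
    (hCinv : ∀ x, C (C x) = x)
    (hCdom : ∀ x ∈ domA, C x ∈ domA)
    (hCAA : ∀ x, x ∈ domA → A x ∈ domAs →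
      A (C x) ∈ domAs ∧ As (A (C x)) = C (As (A x)))
    (hCR : ∀ x, C (R (C x)) = R x)
    (lam0 : ℂ) :
    IsEigenvalueIG domA domAs A As R lam0 ↔
      IsEigenvalueIG domA domAs A As R (-(starRingEnd ℂ) lam0) := by
  let Cₗ : H →ₗ⋆[ℂ] H := { toFun := C, map_add' := hCadd, map_smul' := hCsmul }
  have hneg_conj {lam : ℂ} (h : IsEigenvalueIG domA domAs A As R lam) :=
    h.neg_conj Cₗ hCinv hCdom hCAA hCR
  refine ⟨hneg_conj, fun h => ?_⟩
  simpa using hneg_conj h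

/-- Let `A` be densely defined and closed with `A*A ≥ εI > 0`,
`R ∈ B(H)`, and let `𝔠 = C` be a conjugation (antilinear involution with
`(𝔠u, v) = (𝔠v, u)`) on `H` such that `𝔠 A*A 𝔠 = A*A` and `𝔠 R 𝔠 = R`.  Then `λ₀` is
an eigenvalue of `iG_{A,R}` if and only if `-conj(λ₀)` is an eigenvalue of `iG_{A,R}`. -/
theorem stmt_4 {H : Type*} [NormedAddCommGroup H] [InnerProductSpace ℂ H] [CompleteSpace H]
    (domA domAs : Submodule ℂ H) (A As : H →ₗ[ℂ] H) (R : H →L[ℂ] H)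
    (hdense : Dense (domA : Set H))
    (hclosed : IsClosed {p : H × H | p.1 ∈ domA ∧ p.2 = A p.1})
    (hadj : ∀ u ∈ domA, ∀ v ∈ domAs, (inner ℂ (As v) u : ℂ) = inner ℂ v (A u))
    (ε : ℝ) (hε : 0 < ε)
    (hcoer : ∀ u ∈ domA, ε * ‖u‖ ^ 2 ≤ ‖A u‖ ^ 2)
    (C : H → H)
    (hCadd : ∀ x y, C (x + y) = C x + C y)
    (hCsmul : ∀ (a : ℂ) (x : H), C (a • x) = (starRingEnd ℂ) a • C x)
    (hCinv : ∀ x, C (C x) = x)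
    (hCsym : ∀ x y, (inner ℂ (C x) y : ℂ) = inner ℂ (C y) x)
    (hCdom : ∀ x ∈ domA, C x ∈ domA)
    (hCAA : ∀ x, x ∈ domA → A x ∈ domAs →
      A (C x) ∈ domAs ∧ As (A (C x)) = C (As (A x)))
    (hCR : ∀ x, C (R (C x)) = R x)
    (lam0 : ℂ) :
    IsEigenvalueIG domA domAs A As R lam0 ↔
      IsEigenvalueIG domA domAs A As R (-(starRingEnd ℂ) lam0) :=
  stmt_4_general domA domAs A As R C hCadd hCsmul hCinv hCdom hCAA hCR lam0
end

section
/- Let L(z) = z²I + ziR - A*A with dom(L(z)) = dom(A*A) for z ∈ ℂ, and define E(z) = ((-zI - iR, -iI),(I, 0)) and F(z) = ((I, 0),(-zI, iI)) as 2×2 block operators. Then (L(z) ⊕ I) ∘ F(z) = E(z) ∘ (iG_{A,R} - zI) on dom(A*A) ⊕ dom(A); in particular iG_{A,R} is a global linearization of the quadratic pencil L(·). -/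
/-!
Comparing the two sides entrywise: in the first entry the terms `± R v` and `± i z v` cancel,
and `i² = -1` turns `-i (i (-W u))` into `-W u`; the second entries agree on the nose.
-/

namespace QuadraticPencil

open Complex LinearMap

variable {M : Type*} [AddCommGroup M] [Module ℂ M] (W R : M →ₗ[ℂ] M) (z : ℂ)

/- `pencil W R z`, `companion W R`, `blockE R z`, `blockF z` are `L(z)`, `G_{A,R}`, `E(z)`, `F(z)`
with `W = A*A`, as maps on all of `M`, respectively `M × M`. -/
def pencil : M →ₗ[ℂ] M := z ^ 2 • LinearMap.id + z • I • R - W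

def companion : M × M →ₗ[ℂ] M × M := (snd ℂ M M).prod (-(W ∘ₗ fst ℂ M M) - R ∘ₗ snd ℂ M M)

def blockE : M × M →ₗ[ℂ] M × M :=
  ((-z • LinearMap.id - I • R) ∘ₗ fst ℂ M M - I • snd ℂ M M).prod (fst ℂ M M)

def blockF : M × M →ₗ[ℂ] M × M := (fst ℂ M M).prod (-z • fst ℂ M M + I • snd ℂ M M)

theorem pencil_apply (u : M) : pencil W R z u = z ^ 2 • u + z • I • R u - W u := rfl

theorem companion_apply (u v : M) : companion W R (u, v) = (v, -W u - R v) := rfl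

theorem blockE_apply (x y : M) : blockE R z (x, y) = (-z • x - I • R x - I • y, x) := rfl

theorem blockF_apply (u v : M) : blockF z (u, v) = (u, -z • u + I • v) := rfl

theorem pencil_prodMap_id_comp_blockF :
    (pencil W R z).prodMap LinearMap.id ∘ₗ blockF z =
      blockE R z ∘ₗ (I • companion W R - z • LinearMap.id) := by
  refine LinearMap.ext fun ⟨u, v⟩ => ?_
  simp only [comp_apply, prodMap_apply, blockF_apply, pencil_apply, id_apply,
    LinearMap.sub_apply, LinearMap.smul_apply, companion_apply, Prod.smul_mk, Prod.mk_sub_mk,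
    blockE_apply, map_sub, map_smul, smul_sub, smul_neg, smul_smul, I_mul_I]
  refine Prod.ext ?_ ?_ <;> module

end QuadraticPencil

theorem stmt_5_general {H : Type*} [NormedAddCommGroup H] [InnerProductSpace ℂ H]
    (A As : H →ₗ[ℂ] H) (R : H →L[ℂ] H)
    (z : ℂ) (u v : H) :
    -- (L(z) ⊕ I) (F(z) (u, v)) where F(z)(u,v) = (u, -z•u + i•v) :
    (z ^ 2 • u + z • (Complex.I • R u) - As (A u), (-z) • u + Complex.I • v)
      -- E(z) ((iG_{A,R} - z)(u, v)) where (iG-z)(u,v) = (i•v - z•u, i•(-A*Au - Rv) - z•v) :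
      = ((-z) • (Complex.I • v - z • u) - Complex.I • R (Complex.I • v - z • u)
            - Complex.I • (Complex.I • (-(As (A u)) - R v) - z • v),
         Complex.I • v - z • u) :=
  LinearMap.congr_fun (QuadraticPencil.pencil_prodMap_id_comp_blockF (As ∘ₗ A) R z) (u, v)

/-- Let `L(z) = z²I + ziR - A*A` with `dom(L(z)) = dom(A*A)`, and
define the block operators `E(z) = ((-zI - iR, -iI), (I, 0))` and
`F(z) = ((I, 0), (-zI, iI))`.  Then `(L(z) ⊕ I) ∘ F(z) = E(z) ∘ (iG_{A,R} - zI)` on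
`dom(A*A) ⊕ dom(A)`; in particular `iG_{A,R}` is a global linearization of the
quadratic pencil `L(·)`.  Below, the left-hand side `(L(z) ⊕ I)(F(z)(u,v))` and the
right-hand side `E(z)((iG_{A,R} - z)(u,v))` are written out explicitly. -/
theorem stmt_5 {H : Type*} [NormedAddCommGroup H] [InnerProductSpace ℂ H] [CompleteSpace H]
    (domA domAs : Submodule ℂ H) (A As : H →ₗ[ℂ] H) (R : H →L[ℂ] H)
    (hdense : Dense (domA : Set H))
    (hclosed : IsClosed {p : H × H | p.1 ∈ domA ∧ p.2 = A p.1})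
    (hadj : ∀ u ∈ domA, ∀ v ∈ domAs, (inner ℂ (As v) u : ℂ) = inner ℂ v (A u))
    (ε : ℝ) (hε : 0 < ε)
    (hcoer : ∀ u ∈ domA, ε * ‖u‖ ^ 2 ≤ ‖A u‖ ^ 2)
    (z : ℂ) (u v : H) (hu : u ∈ domA) (huA : A u ∈ domAs) (hv : v ∈ domA) :
    -- (L(z) ⊕ I) (F(z) (u, v)) where F(z)(u,v) = (u, -z•u + i•v) :
    (z ^ 2 • u + z • (Complex.I • R u) - As (A u), (-z) • u + Complex.I • v)
      -- E(z) ((iG_{A,R} - z)(u, v)) where (iG-z)(u,v) = (i•v - z•u, i•(-A*Au - Rv) - z•v) :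
      = ((-z) • (Complex.I • v - z • u) - Complex.I • R (Complex.I • v - z • u)
            - Complex.I • (Complex.I • (-(As (A u)) - R v) - z • v),
         Complex.I • v - z • u) :=
  stmt_5_general A As R z u v
end

section
/- Let A : dom(A) ⊆ H₁ → H₂ be densely defined closed, V ∈ B(H₁), Q = ((0, A*),(A, 0)), W = ((V, 0),(0, 0)). Suppose ζ ∈ ℂ with ζ² ∈ ρ(A*A) ∩ ρ(AA*) and [I + ζV(A*A - ζ²I)⁻¹]⁻¹ ∈ B(H₁). Then ζ ∈ ρ(Q + W) and the resolvent (Q + W - ζI)⁻¹ is given explicitly by the 2×2 block matrix with entries: (1,1): ζ(A*A - ζ²)⁻¹[I + ζV(A*A - ζ²)⁻¹]⁻¹; (2,1): A(A*A - ζ²)⁻¹[I + ζV(A*A - ζ²)⁻¹]⁻¹; (1,2): -ζ(A*A - ζ²)⁻¹[I + ζV(A*A - ζ²)⁻¹]⁻¹VA*(AA* - ζ²)⁻¹ + A*(AA* - ζ²)⁻¹; (2,2): -A(A*A - ζ²)⁻¹[I + ζV(A*A - ζ²)⁻¹]⁻¹VA*(AA* - ζ²)⁻¹ + ζ(AA*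 - ζ²)⁻¹. -/
/-!
The block operator `Q + W - ζ` is inverted by Gaussian elimination: the second row
`A x - ζ y = y₀` is solved with `(AA* - ζ²)⁻¹`, which leaves for the first component the
equation `(I + ζ V (A*A - ζ²)⁻¹) w = x₀ - V A* (AA* - ζ²)⁻¹ y₀`, solved by `J`. This gives
a right inverse. It is also a left inverse because `Q + W - ζ` is injective on
`dom(A) ⊕ dom(A*)`: a kernel vector `(a, b)` has `A a = ζ b`, hence
`(A*A - ζ²) a = -ζ V a`, so `(I + ζ V (A*A - ζ²)⁻¹) (V a) = 0`; then `V a = 0`, `a = 0`,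
`A* b = 0`, `ζ b = 0`, and `(AA* - ζ²)⁻¹` kills `b`.
-/

/-- The explicit 2×2 block operator of Theorem 4.2: candidate resolvent
`(Q + W - ζ)⁻¹` built from `R1 = (A*A - ζ²)⁻¹`, `R2 = (AA* - ζ²)⁻¹`,
`J = [I + ζV(A*A - ζ²)⁻¹]⁻¹` and the (unbounded) operators `A`, `A*` (encoded by
total linear maps `A`, `As`). -/
noncomputable def resQW {H₁ H₂ : Type*}
    [NormedAddCommGroup H₁] [InnerProductSpace ℂ H₁]
    [NormedAddCommGroup H₂] [InnerProductSpace ℂ H₂]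
    (A : H₁ →ₗ[ℂ] H₂) (As : H₂ →ₗ[ℂ] H₁)
    (V J R1 : H₁ →L[ℂ] H₁) (R2 : H₂ →L[ℂ] H₂) (ζ : ℂ)
    (x : H₁) (y : H₂) : H₁ × H₂ :=
  (ζ • R1 (J x) - ζ • R1 (J (V (As (R2 y)))) + As (R2 y),
   A (R1 (J x)) - A (R1 (J (V (As (R2 y))))) + ζ • R2 y)

section Injectivity

variable {R E F : Type*} [CommRing R] [AddCommGroup E] [Module R E] [AddCommGroup F]
  [Module R F] {D : Submodule R E} {D' : Submodule R F} {A : E →ₗ[R] F} {As : F →ₗ[R] E}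
  {V J R1 : E →ₗ[R] E} {R2 : F →ₗ[R] F} {ζ : R}

/-- `Q + W - ζ` for `Q = ((0, A*), (A, 0))` and `W = ((V, 0), (0, 0))`. -/
def qwSubSmul (A : E →ₗ[R] F) (As : F →ₗ[R] E) (V : E →ₗ[R] E) (ζ : R) (p : E × F) : E × F :=
  (V p.1 + As p.2 - ζ • p.1, A p.1 - ζ • p.2)

theorem eq_zero_of_qwSubSmul_eq_zero
    (hR1l : ∀ u ∈ D, A u ∈ D' → R1 (As (A u) - ζ ^ 2 • u) = u)
    (hR2l : ∀ v ∈ D', As v ∈ D → R2 (A (As v) - ζ ^ 2 • v) = v)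
    (hJ1 : ∀ x, J (x + ζ • V (R1 x)) = x)
    {a : E} {b : F} (ha : a ∈ D) (hb : b ∈ D') (h : qwSubSmul A As V ζ (a, b) = 0) :
    a = 0 ∧ b = 0 := by
  obtain ⟨h1, h2⟩ := Prod.ext_iff.mp h
  dsimp only [qwSubSmul, Prod.fst_zero, Prod.snd_zero] at h1 h2
  have hAa : A a = ζ • b := sub_eq_zero.mp h2
  have hAa_mem : A a ∈ D' := hAa ▸ D'.smul_mem ζ hb
  have hshift : As (A a) - ζ ^ 2 • a = (-ζ) • V a := by
    rw [hAa, map_smul]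
    linear_combination (norm := module) ζ • h1
  have ha_eq : a = (-ζ) • R1 (V a) := by
    rw [← map_smul, ← hshift, hR1l a ha hAa_mem]
  have hVa : V a = 0 := by
    have hker : V a + ζ • V (R1 (V a)) = 0 := by
      rw [← map_smul, ← map_add, ← map_zero V]
      congr 1
      linear_combination (norm := module) ha_eq
    rw [← hJ1 (V a), hker, map_zero]
  have ha0 : a = 0 := by rw [ha_eq, hVa, map_zero, smul_zero]
  have hAsb : As b = 0 := by simpa [ha0] using h1
  have hζb : ζ • b = 0 := by rw [← hAa, ha0, map_zero]
  refine ⟨ha0, ?_⟩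
  rw [← hR2l b hb (hAsb ▸ D.zero_mem), hAsb, map_zero, pow_two, mul_smul, hζb, smul_zero,
    sub_zero, map_zero]

theorem qwSubSmul_injOn
    (hR1l : ∀ u ∈ D, A u ∈ D' → R1 (As (A u) - ζ ^ 2 • u) = u)
    (hR2l : ∀ v ∈ D', As v ∈ D → R2 (A (As v) - ζ ^ 2 • v) = v)
    (hJ1 : ∀ x, J (x + ζ • V (R1 x)) = x) :
    Set.InjOn (qwSubSmul A As V ζ) (D ×ˢ D' : Set (E × F)) := by
  rintro ⟨x, y⟩ ⟨hx, hy⟩ ⟨x', y'⟩ ⟨hx', hy'⟩ h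
  have hsub : qwSubSmul A As V ζ (x - x', y - y') = 0 := by
    obtain ⟨h1, h2⟩ := Prod.ext_iff.mp h
    dsimp only [qwSubSmul] at h1 h2 ⊢
    ext <;> simp only [map_sub, Prod.fst_zero, Prod.snd_zero]
    · linear_combination (norm := module) h1
    · linear_combination (norm := module) h2
  obtain ⟨hx0, hy0⟩ :=
    eq_zero_of_qwSubSmul_eq_zero hR1l hR2l hJ1 (D.sub_mem hx hx') (D'.sub_mem hy hy') hsub
  exact Prod.ext (sub_eq_zero.mp hx0) (sub_eq_zero.mp hy0)

end Injectivity

section RightInverse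

variable {H₁ H₂ : Type*} [NormedAddCommGroup H₁] [InnerProductSpace ℂ H₁]
  [NormedAddCommGroup H₂] [InnerProductSpace ℂ H₂] {domA : Submodule ℂ H₁}
  {domAs : Submodule ℂ H₂} {A : H₁ →ₗ[ℂ] H₂} {As : H₂ →ₗ[ℂ] H₁}
  {V J R1 : H₁ →L[ℂ] H₁} {R2 : H₂ →L[ℂ] H₂} {ζ : ℂ}

theorem resQW_fst_mem (hR1dom : ∀ x, R1 x ∈ domA ∧ A (R1 x) ∈ domAs)
    (hR2dom : ∀ y, R2 y ∈ domAs ∧ As (R2 y) ∈ domA) (x : H₁) (y : H₂) :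
    (resQW A As V J R1 R2 ζ x y).1 ∈ domA :=
  domA.add_mem (domA.sub_mem (domA.smul_mem _ (hR1dom _).1) (domA.smul_mem _ (hR1dom _).1))
    (hR2dom y).2

theorem resQW_snd_mem (hR1dom : ∀ x, R1 x ∈ domA ∧ A (R1 x) ∈ domAs)
    (hR2dom : ∀ y, R2 y ∈ domAs ∧ As (R2 y) ∈ domA) (x : H₁) (y : H₂) :
    (resQW A As V J R1 R2 ζ x y).2 ∈ domAs :=
  domAs.add_mem (domAs.sub_mem (hR1dom _).2 (hR1dom _).2) (domAs.smul_mem _ (hR2dom y).1)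

theorem qwSubSmul_resQW (hR1r : ∀ x, As (A (R1 x)) - ζ ^ 2 • R1 x = x)
    (hR2r : ∀ y, A (As (R2 y)) - ζ ^ 2 • R2 y = y) (hJ2 : ∀ x, J x + ζ • V (R1 (J x)) = x)
    (x : H₁) (y : H₂) : qwSubSmul A As V ζ (resQW A As V J R1 R2 ζ x y) = (x, y) := by
  simp only [qwSubSmul, resQW, ContinuousLinearMap.coe_coe, map_add, map_sub, map_smul]
  ext
  · linear_combination (norm := module)
      hR1r (J x) - hR1r (J (V (As (R2 y)))) + hJ2 x - hJ2 (V (As (R2 y)))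
  · linear_combination (norm := module) hR2r y

end RightInverse

theorem stmt_12_general {H₁ H₂ : Type*}
    [NormedAddCommGroup H₁] [InnerProductSpace ℂ H₁]
    [NormedAddCommGroup H₂] [InnerProductSpace ℂ H₂]
    (domA : Submodule ℂ H₁) (domAs : Submodule ℂ H₂)
    (A : H₁ →ₗ[ℂ] H₂) (As : H₂ →ₗ[ℂ] H₁)
    (V : H₁ →L[ℂ] H₁) (ζ : ℂ)
    -- R1 = (A*A - ζ²)⁻¹ :
    (R1 : H₁ →L[ℂ] H₁)
    (hR1dom : ∀ x, R1 x ∈ domA ∧ A (R1 x) ∈ domAs)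
    (hR1r : ∀ x, As (A (R1 x)) - ζ ^ 2 • R1 x = x)
    (hR1l : ∀ u ∈ domA, A u ∈ domAs → R1 (As (A u) - ζ ^ 2 • u) = u)
    -- R2 = (AA* - ζ²)⁻¹ :
    (R2 : H₂ →L[ℂ] H₂)
    (hR2dom : ∀ y, R2 y ∈ domAs ∧ As (R2 y) ∈ domA)
    (hR2r : ∀ y, A (As (R2 y)) - ζ ^ 2 • R2 y = y)
    (hR2l : ∀ v ∈ domAs, As v ∈ domA → R2 (A (As v) - ζ ^ 2 • v) = v)
    -- J = [I + ζ V (A*A - ζ²)⁻¹]⁻¹ (two-sided inverse) :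
    (J : H₁ →L[ℂ] H₁)
    (hJ1 : ∀ x, J (x + ζ • V (R1 x)) = x)
    (hJ2 : ∀ x, J x + ζ • V (R1 (J x)) = x) :
    -- resQW is a right inverse of Q + W - ζ, with values in dom(A) ⊕ dom(A*) :
    (∀ (x : H₁) (y : H₂),
      (resQW A As V J R1 R2 ζ x y).1 ∈ domA ∧
      (resQW A As V J R1 R2 ζ x y).2 ∈ domAs ∧
      V (resQW A As V J R1 R2 ζ x y).1 + As (resQW A As V J R1 R2 ζ x y).2
        - ζ • (resQW A As V J R1 R2 ζ x y).1 = x ∧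
      A (resQW A As V J R1 R2 ζ x y).1 - ζ • (resQW A As V J R1 R2 ζ x y).2 = y)
    ∧ -- and a left inverse on dom(A) ⊕ dom(A*) :
    (∀ x ∈ domA, ∀ y ∈ domAs,
      resQW A As V J R1 R2 ζ (V x + As y - ζ • x) (A x - ζ • y) = (x, y)) := by
  have hright := qwSubSmul_resQW (R2 := R2) hR1r hR2r hJ2
  have hinj := qwSubSmul_injOn (A := A) (As := As) (V := V) (J := J) (ζ := ζ) hR1l hR2l hJ1
  refine ⟨fun x y => ⟨resQW_fst_mem hR1dom hR2dom x y, resQW_snd_mem hR1dom hR2dom x y,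
    congrArg Prod.fst (hright x y), congrArg Prod.snd (hright x y)⟩, fun x hx y hy => ?_⟩
  exact hinj ⟨resQW_fst_mem hR1dom hR2dom _ _, resQW_snd_mem hR1dom hR2dom _ _⟩ ⟨hx, hy⟩
    (hright _ _)

/-- Let `A : dom(A) ⊆ H₁ → H₂` be densely defined closed,
`V ∈ B(H₁)`, `Q = ((0, A*), (A, 0))`, `W = ((V, 0), (0, 0))`.  Suppose `ζ ∈ ℂ` with
`ζ² ∈ ρ(A*A) ∩ ρ(AA*)` (witnessed by the two-sided resolvents `R1`, `R2`) and
`[I + ζV(A*A - ζ²I)⁻¹]⁻¹ ∈ B(H₁)` (witnessed by `J`).  Then `ζ ∈ ρ(Q + W)` and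
`(Q + W - ζI)⁻¹` is given explicitly by the block matrix `resQW`:  it maps into
`dom(A) ⊕ dom(A*)` and is a two-sided inverse of `Q + W - ζI`. -/
theorem stmt_12 {H₁ H₂ : Type*}
    [NormedAddCommGroup H₁] [InnerProductSpace ℂ H₁] [CompleteSpace H₁]
    [NormedAddCommGroup H₂] [InnerProductSpace ℂ H₂] [CompleteSpace H₂]
    (domA : Submodule ℂ H₁) (domAs : Submodule ℂ H₂)
    (A : H₁ →ₗ[ℂ] H₂) (As : H₂ →ₗ[ℂ] H₁)
    (hdense : Dense (domA : Set H₁)) (hdense' : Dense (domAs : Set H₂))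
    (hclosed : IsClosed {p : H₁ × H₂ | p.1 ∈ domA ∧ p.2 = A p.1})
    (hadj : ∀ u ∈ domA, ∀ v ∈ domAs, (inner ℂ (As v) u : ℂ) = inner ℂ v (A u))
    (hadj_max : ∀ (v : H₂) (w : H₁),
      (∀ u ∈ domA, (inner ℂ w u : ℂ) = inner ℂ v (A u)) → v ∈ domAs ∧ As v = w)
    (V : H₁ →L[ℂ] H₁) (ζ : ℂ)
    -- R1 = (A*A - ζ²)⁻¹ :
    (R1 : H₁ →L[ℂ] H₁)
    (hR1dom : ∀ x, R1 x ∈ domA ∧ A (R1 x) ∈ domAs)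
    (hR1r : ∀ x, As (A (R1 x)) - ζ ^ 2 • R1 x = x)
    (hR1l : ∀ u ∈ domA, A u ∈ domAs → R1 (As (A u) - ζ ^ 2 • u) = u)
    -- R2 = (AA* - ζ²)⁻¹ :
    (R2 : H₂ →L[ℂ] H₂)
    (hR2dom : ∀ y, R2 y ∈ domAs ∧ As (R2 y) ∈ domA)
    (hR2r : ∀ y, A (As (R2 y)) - ζ ^ 2 • R2 y = y)
    (hR2l : ∀ v ∈ domAs, As v ∈ domA → R2 (A (As v) - ζ ^ 2 • v) = v)
    -- J = [I + ζ V (A*A - ζ²)⁻¹]⁻¹ (two-sided inverse) :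
    (J : H₁ →L[ℂ] H₁)
    (hJ1 : ∀ x, J (x + ζ • V (R1 x)) = x)
    (hJ2 : ∀ x, J x + ζ • V (R1 (J x)) = x) :
    -- resQW is a right inverse of Q + W - ζ, with values in dom(A) ⊕ dom(A*) :
    (∀ (x : H₁) (y : H₂),
      (resQW A As V J R1 R2 ζ x y).1 ∈ domA ∧
      (resQW A As V J R1 R2 ζ x y).2 ∈ domAs ∧
      V (resQW A As V J R1 R2 ζ x y).1 + As (resQW A As V J R1 R2 ζ x y).2
        - ζ • (resQW A As V J R1 R2 ζ x y).1 = x ∧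
      A (resQW A As V J R1 R2 ζ x y).1 - ζ • (resQW A As V J R1 R2 ζ x y).2 = y)
    ∧ -- and a left inverse on dom(A) ⊕ dom(A*) :
    (∀ x ∈ domA, ∀ y ∈ domAs,
      resQW A As V J R1 R2 ζ (V x + As y - ζ • x) (A x - ζ • y) = (x, y)) :=
  stmt_12_general domA domAs A As V ζ R1 hR1dom hR1r hR1l R2 hR2dom hR2r hR2l J hJ1 hJ2
end
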